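/- Let 0 ≥ s > −1/m and −1/2 < b' < ms/2 for m ≥ 2. Then there exists ε > 0 such that for all ξ, ξ₁,...,ξ_m ∈ ℝ^n with ξ = Σξ_i and τ, τ₁,...,τ_m ∈ ℝ with τ = Στ_i, one has ⟨ξ⟩^ε ∏_{i=1}^m ⟨ξ_i⟩^{−s+ε} ≤ c ( ⟨τ + |ξ|²⟩^{−b'} + Σ_{i=1}^m ⟨τ_i − |ξ_i|²⟩^{−b'} χ_{A_i} ), where A_i is the set where ⟨τ_i − |ξ_i|²⟩ ≥ ⟨τ + |ξ|²⟩. -/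

import Mathlib

/-!
Since `τ = Σ τᵢ`, the resonance identity
`|ξ|² + Σ |ξᵢ|² = (τ + |ξ|²) - Σ (τᵢ - |ξᵢ|²)` bounds `⟨ξ⟩² + Σ ⟨ξᵢ⟩²` by a multiple of the
largest of the modulations `⟨τ + |ξ|²⟩`, `⟨τᵢ - |ξᵢ|²⟩`, and that largest one is either
`⟨τ + |ξ|²⟩` itself or some `⟨τᵢ - |ξᵢ|²⟩` on `Aᵢ`. Every factor on the left is at most
`(⟨ξ⟩² + Σ ⟨ξᵢ⟩²)^{1/2}`, and `ε` is chosen so that the total exponent on the left is `-2b'`;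
the condition `b' < ms/2` is what makes such an `ε > 0` exist.
-/

open scoped BigOperators

/-- Japanese bracket. -/
noncomputable def jb (x : ℝ) : ℝ := Real.sqrt (1 + x ^ 2)

/-- Japanese bracket of a vector. -/
noncomputable def jbv {n : ℕ} (x : EuclideanSpace ℝ (Fin n)) : ℝ := Real.sqrt (1 + ‖x‖ ^ 2)

open Finset

lemma one_le_jb (x : ℝ) : 1 ≤ jb x :=
  Real.one_le_sqrt.mpr (by nlinarith [sq_nonneg x])

lemma abs_le_jb (x : ℝ) : |x| ≤ jb x :=
  Real.abs_le_sqrt (by linarith)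

lemma jbv_sq {n : ℕ} (x : EuclideanSpace ℝ (Fin n)) : jbv x ^ 2 = 1 + ‖x‖ ^ 2 :=
  Real.sq_sqrt (by positivity)

lemma jbv_nonneg {n : ℕ} (x : EuclideanSpace ℝ (Fin n)) : 0 ≤ jbv x :=
  Real.sqrt_nonneg _

lemma add_sum_le_abs_add_sum_abs_sub {ι : Type*} (s : Finset ι) (t b : ι → ℝ)
    (a : ℝ) : a + ∑ i ∈ s, b i ≤ |∑ i ∈ s, t i + a| + ∑ i ∈ s, |t i - b i| :=
  calc a + ∑ i ∈ s, b i = (∑ i ∈ s, t i + a) - ∑ i ∈ s, (t i - b i) := by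
        rw [sum_sub_distrib]; ring
    _ ≤ |∑ i ∈ s, t i + a| + |∑ i ∈ s, (t i - b i)| := (le_abs_self _).trans (abs_sub _ _)
    _ ≤ |∑ i ∈ s, t i + a| + ∑ i ∈ s, |t i - b i| := by gcongr; exact abs_sum_le_sum_abs _ _

lemma jbv_sq_add_sum_jbv_sq_le {ι : Type*} [Fintype ι] {n : ℕ}
    (ξ : ι → EuclideanSpace ℝ (Fin n)) (τ : ι → ℝ) (Ξ : EuclideanSpace ℝ (Fin n)) :
    jbv Ξ ^ 2 + ∑ i, jbv (ξ i) ^ 2 ≤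
      2 * (jb (∑ i, τ i + ‖Ξ‖ ^ 2) + ∑ i, jb (τ i - ‖ξ i‖ ^ 2)) := by
  have hres := add_sum_le_abs_add_sum_abs_sub univ τ (fun i ↦ ‖ξ i‖ ^ 2) (‖Ξ‖ ^ 2)
  have habs : |∑ i, τ i + ‖Ξ‖ ^ 2| + ∑ i, |τ i - ‖ξ i‖ ^ 2| ≤
      jb (∑ i, τ i + ‖Ξ‖ ^ 2) + ∑ i, jb (τ i - ‖ξ i‖ ^ 2) := by
    gcongr with i <;> exact abs_le_jb _
  have hone : 1 + ∑ _i : ι, (1 : ℝ) ≤ jb (∑ i, τ i + ‖Ξ‖ ^ 2) + ∑ i, jb (τ i - ‖ξ i‖ ^ 2) := by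
    gcongr with i <;> exact one_le_jb _
  simp only [jbv_sq, sum_add_distrib] at hres habs hone ⊢
  linarith

lemma rpow_mul_prod_rpow_le {ι : Type*} [Fintype ι] {x : ℝ} {y : ι → ℝ}
    (hx : 0 ≤ x) (hy : ∀ i, 0 ≤ y i) {α β : ℝ} (hα : 0 ≤ α) (hβ : 0 ≤ β) :
    x ^ α * ∏ i, y i ^ β ≤ (x ^ 2 + ∑ i, y i ^ 2) ^ ((α + Fintype.card ι * β) / 2) := by
  set R := x ^ 2 + ∑ i, y i ^ 2
  have hR : 0 ≤ R := by positivity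
  have hxR : x ≤ √R := Real.le_sqrt_of_sq_le (le_add_of_nonneg_right (by positivity))
  have hyR (i : ι) : y i ≤ √R := Real.le_sqrt_of_sq_le <|
    (single_le_sum (fun j _ ↦ sq_nonneg (y j)) (mem_univ i)).trans
      (le_add_of_nonneg_left (sq_nonneg x))
  have hyβ (i : ι) : 0 ≤ y i ^ β := Real.rpow_nonneg (hy i) β
  calc x ^ α * ∏ i, y i ^ β ≤ √R ^ α * ∏ _i : ι, √R ^ β :=
        mul_le_mul (Real.rpow_le_rpow hx hxR hα)
          (prod_le_prod (fun i _ ↦ hyβ i) fun i _ ↦ Real.rpow_le_rpow (hy i) (hyR i) hβ)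
          (prod_nonneg fun i _ ↦ hyβ i) (by positivity)
    _ = R ^ ((α + Fintype.card ι * β) / 2) := by
        rw [prod_const, card_univ, ← Real.rpow_natCast, ← Real.rpow_mul (Real.sqrt_nonneg R),
          ← Real.rpow_add_of_nonneg (Real.sqrt_nonneg R) hα (by positivity), Real.sqrt_eq_rpow,
          ← Real.rpow_mul hR]
        ring_nf

lemma exists_dominant_rpow_le {ι : Type*} [Fintype ι] {D : ℝ} {d : ι → ℝ} (hD : 0 ≤ D)
    (hd : ∀ i, 0 ≤ d i) (p : ℝ) :
    ∃ M, D ≤ M ∧ (∀ i, d i ≤ M) ∧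
      M ^ p ≤ D ^ p + ∑ i, if D ≤ d i then d i ^ p else 0 := by
  have hterm (i : ι) : 0 ≤ if D ≤ d i then d i ^ p else 0 :=
    ite_nonneg (Real.rpow_nonneg (hd i) p) le_rfl
  by_cases hle : ∀ i, d i ≤ D
  · exact ⟨D, le_rfl, hle, le_add_of_nonneg_right (sum_nonneg fun i _ ↦ hterm i)⟩
  push Not at hle
  obtain ⟨j, hj⟩ := hle
  obtain ⟨k, -, hk⟩ := exists_max_image univ d ⟨j, mem_univ j⟩
  have hDk : D ≤ d k := hj.le.trans (hk j (mem_univ j))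
  refine ⟨d k, hDk, fun i ↦ hk i (mem_univ i), ?_⟩
  calc d k ^ p = if D ≤ d k then d k ^ p else 0 := (if_pos hDk).symm
    _ ≤ ∑ i, if D ≤ d i then d i ^ p else 0 := single_le_sum (fun i _ ↦ hterm i) (mem_univ k)
    _ ≤ D ^ p + ∑ i, if D ≤ d i then d i ^ p else 0 :=
        le_add_of_nonneg_left (Real.rpow_nonneg hD p)

lemma add_sum_rpow_le {ι : Type*} [Fintype ι] {D : ℝ} {d : ι → ℝ} (hD : 0 ≤ D)
    (hd : ∀ i, 0 ≤ d i) {p : ℝ} (hp : 0 ≤ p) :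
    (D + ∑ i, d i) ^ p ≤
      (Fintype.card ι + 1) ^ p * (D ^ p + ∑ i, if D ≤ d i then d i ^ p else 0) := by
  obtain ⟨M, hDM, hdM, hMp⟩ := exists_dominant_rpow_le hD hd p
  have hsum : D + ∑ i, d i ≤ (Fintype.card ι + 1) * M := by
    calc D + ∑ i, d i ≤ M + ∑ _i : ι, M := by gcongr with i; exact hdM i
      _ = (Fintype.card ι + 1) * M := by rw [sum_const, card_univ, nsmul_eq_mul]; ring
  calc (D + ∑ i, d i) ^ p ≤ ((Fintype.card ι + 1) * M) ^ p :=
        Real.rpow_le_rpow (add_nonneg hD (sum_nonneg fun i _ ↦ hd i)) hsum hp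
    _ = (Fintype.card ι + 1) ^ p * M ^ p := Real.mul_rpow (by positivity) (hD.trans hDM)
    _ ≤ _ := by gcongr

theorem multilinear_weight_estimate_general (m n : ℕ) (s b' : ℝ)
    (hs0 : s ≤ 0) (hb'2 : b' < (m : ℝ) * s / 2) :
    ∃ ε > (0 : ℝ), ∃ c > (0 : ℝ),
      ∀ (ξ : Fin m → EuclideanSpace ℝ (Fin n)) (τ : Fin m → ℝ)
        (Ξ : EuclideanSpace ℝ (Fin n)) (T : ℝ), Ξ = ∑ i, ξ i → T = ∑ i, τ i →
      jbv Ξ ^ ε * ∏ i, jbv (ξ i) ^ (-s + ε) ≤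
        c * (jb (T + ‖Ξ‖ ^ 2) ^ (-b') +
          ∑ i, if jb (T + ‖Ξ‖ ^ 2) ≤ jb (τ i - ‖ξ i‖ ^ 2) then
            jb (τ i - ‖ξ i‖ ^ 2) ^ (-b') else 0) := by
  have hms : (m : ℝ) * s ≤ 0 := mul_nonpos_of_nonneg_of_nonpos m.cast_nonneg hs0
  have hb' : b' < 0 := by linarith
  set ε := ((m : ℝ) * s - 2 * b') / (m + 1)
  have hε : 0 < ε := div_pos (by linarith) (by positivity)
  have hexp : (ε + Fintype.card (Fin m) * (-s + ε)) / 2 = -b' := by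
    simp only [Fintype.card_fin, ε]; field_simp; ring
  refine ⟨ε, hε, (2 * (m + 1)) ^ (-b'), by positivity, ?_⟩
  rintro ξ τ Ξ T - rfl
  set D := jb (∑ i, τ i + ‖Ξ‖ ^ 2)
  set d := fun i ↦ jb (τ i - ‖ξ i‖ ^ 2)
  have hD : 0 ≤ D := zero_le_one.trans (one_le_jb _)
  have hd (i : Fin m) : 0 ≤ d i := zero_le_one.trans (one_le_jb _)
  calc jbv Ξ ^ ε * ∏ i, jbv (ξ i) ^ (-s + ε)
      ≤ (jbv Ξ ^ 2 + ∑ i, jbv (ξ i) ^ 2) ^ (-b') := hexp ▸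
        rpow_mul_prod_rpow_le (jbv_nonneg Ξ) (fun i ↦ jbv_nonneg (ξ i)) hε.le (by linarith)
    _ ≤ (2 * (D + ∑ i, d i)) ^ (-b') :=
        Real.rpow_le_rpow (by positivity) (jbv_sq_add_sum_jbv_sq_le ξ τ Ξ) (by linarith)
    _ = 2 ^ (-b') * (D + ∑ i, d i) ^ (-b') :=
        Real.mul_rpow zero_le_two (add_nonneg hD (sum_nonneg fun i _ ↦ hd i))
    _ ≤ 2 ^ (-b') *
          ((m + 1) ^ (-b') * (D ^ (-b') + ∑ i, if D ≤ d i then d i ^ (-b') else 0)) := by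
        grw [add_sum_rpow_le hD hd (by linarith : 0 ≤ -b'), Fintype.card_fin]
    _ = _ := by rw [Real.mul_rpow zero_le_two (by positivity), mul_assoc]

/-- Pointwise weight estimate reducing the multilinear `X^{s,b}` estimate for `ū^m` to
Strichartz estimates: for `0 ≥ s > −1/m`, `−1/2 < b' < ms/2`, there is `ε > 0` with
`⟨ξ⟩^ε ∏ᵢ ⟨ξᵢ⟩^{−s+ε} ≤ c (⟨τ+|ξ|²⟩^{−b'} + Σᵢ ⟨τᵢ−|ξᵢ|²⟩^{−b'} χ_{Aᵢ})`, where on `Aᵢ`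
one has `⟨τᵢ−|ξᵢ|²⟩ ≥ ⟨τ+|ξ|²⟩`. -/
theorem multilinear_weight_estimate (m n : ℕ) (hm : 2 ≤ m) (s b' : ℝ)
    (hs0 : s ≤ 0) (hs : -(1 / (m : ℝ)) < s) (hb'1 : -(1 / 2 : ℝ) < b')
    (hb'2 : b' < (m : ℝ) * s / 2) :
    ∃ ε > (0 : ℝ), ∃ c > (0 : ℝ),
      ∀ (ξ : Fin m → EuclideanSpace ℝ (Fin n)) (τ : Fin m → ℝ)
        (Ξ : EuclideanSpace ℝ (Fin n)) (T : ℝ), Ξ = ∑ i, ξ i → T = ∑ i, τ i →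
      jbv Ξ ^ ε * ∏ i, jbv (ξ i) ^ (-s + ε) ≤
        c * (jb (T + ‖Ξ‖ ^ 2) ^ (-b') +
          ∑ i, if jb (T + ‖Ξ‖ ^ 2) ≤ jb (τ i - ‖ξ i‖ ^ 2) then
            jb (τ i - ‖ξ i‖ ^ 2) ^ (-b') else 0) :=
  multilinear_weight_estimate_general m n s b' hs0 hb'2
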